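/- Fix an odd positive integer j and set δ(j) = 1 if j ≡ 1 (mod 4) and δ(j) = −1 if j ≡ 3 (mod 4). Then, along the subsequence (m, n) = (m, m+j), the half-side Neumann data of u_{m,m+j} on the bottom of the right isosceles triangle satisfies lim_{m→∞} ∫₀^{1/2} h_{m,m+j}²·(∂_y u_{m,m+j}(x,0))² dx = 1 + δ(j)·2/(jπ). -/

import Mathlib

open Real MeasureTheory Filter

/-- The sign `ε(m,n)`: `1` if `m+n` is odd, `-1` if `m+n` is even. -/
noncomputable def eps (m n : ℕ) : ℝ := if Odd (m + n) then 1 else -1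

/-- The eigenfunctions `u_{mn}` on the right isosceles triangle. -/
noncomputable def u (m n : ℕ) (x y : ℝ) : ℝ :=
  2 * (Real.sin (n * Real.pi * x) * Real.sin (m * Real.pi * y)
      + eps m n * Real.sin (m * Real.pi * x) * Real.sin (n * Real.pi * y))

/-- The semiclassical parameter `h_{mn} = (π²(m²+n²))^{-1/2}`. -/
noncomputable def hmn (m n : ℕ) : ℝ :=
  1 / Real.sqrt (Real.pi ^ 2 * ((m : ℝ) ^ 2 + (n : ℝ) ^ 2))

lemma sin_odd_half (r : ℕ) : Real.sin ((2*r+1)*π/2) = (-1:ℝ)^r := by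
  have h : ((2*(r:ℝ)+1)*π/2) = r*π + π/2 := by ring
  rw [h, Real.sin_add_pi_div_two]
  have := Real.cos_nat_mul_pi_sub 0 r
  simpa using this

lemma integral_two_sines (a b A B : ℝ) (hA : A ≠ 0) (hB : B ≠ 0) (hD : A - B ≠ 0) (hS : A + B ≠ 0) :
    ∫ x in (0:ℝ)..(1/2), (a * Real.sin (A*x) + b * Real.sin (B*x))^2
      = a^2/(4*A)*(A - Real.sin A) + b^2/(4*B)*(B - Real.sin B)
        + a*b/(A-B) * Real.sin ((A-B)*(1/2)) - a*b/(A+B) * Real.sin ((A+B)*(1/2)) := by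
  have hF : ∀ x ∈ Set.uIcc (0:ℝ) (1/2), HasDerivAt (fun x : ℝ =>
      a^2/(4*A)*(2*A*x - Real.sin (2*A*x)) + b^2/(4*B)*(2*B*x - Real.sin (2*B*x))
        + a*b/(A-B) * Real.sin ((A-B)*x) - a*b/(A+B) * Real.sin ((A+B)*x))
      ((a * Real.sin (A*x) + b * Real.sin (B*x))^2) x := by
    intro x _
    have d1 : HasDerivAt (fun x : ℝ => 2*A*x - Real.sin (2*A*x))
        (2*A*1 - Real.cos (2*A*x)*(2*A*1)) x :=
      ((hasDerivAt_id x).const_mul (2*A)).sub ((hasDerivAt_id x).const_mul (2*A)).sin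
    have d2 : HasDerivAt (fun x : ℝ => 2*B*x - Real.sin (2*B*x))
        (2*B*1 - Real.cos (2*B*x)*(2*B*1)) x :=
      ((hasDerivAt_id x).const_mul (2*B)).sub ((hasDerivAt_id x).const_mul (2*B)).sin
    have d3 : HasDerivAt (fun x : ℝ => Real.sin ((A-B)*x)) (Real.cos ((A-B)*x)*((A-B)*1)) x :=
      ((hasDerivAt_id x).const_mul (A-B)).sin
    have d4 : HasDerivAt (fun x : ℝ => Real.sin ((A+B)*x)) (Real.cos ((A+B)*x)*((A+B)*1)) x :=
      ((hasDerivAt_id x).const_mul (A+B)).sin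
    have D := (((d1.const_mul (a^2/(4*A))).add (d2.const_mul (b^2/(4*B)))).add
        (d3.const_mul (a*b/(A-B)))).sub (d4.const_mul (a*b/(A+B)))
    refine D.congr_deriv ?_
    symm
    have t1 : Real.cos (2*A*x) = 1 - 2*Real.sin (A*x)^2 := by
      have := Real.sin_sq_eq_half_sub (A*x); rw [show 2*A*x = 2*(A*x) by ring]; linarith
    have t2 : Real.cos (2*B*x) = 1 - 2*Real.sin (B*x)^2 := by
      have := Real.sin_sq_eq_half_sub (B*x); rw [show 2*B*x = 2*(B*x) by ring]; linarith
    have t3 : Real.cos ((A-B)*x) - Real.cos ((A+B)*x) = 2*Real.sin (A*x)*Real.sin (B*x) := by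
      rw [Real.cos_sub_cos, show ((A-B)*x + (A+B)*x)/2 = A*x by ring,
        show ((A-B)*x - (A+B)*x)/2 = -(B*x) by ring, Real.sin_neg]; ring
    rw [t1, t2]
    field_simp
    have t3' : Real.cos (x*(A-B)) - Real.cos (x*(A+B)) = 2*Real.sin (A*x)*Real.sin (x*B) := by
      rw [mul_comm x, mul_comm x, mul_comm x]; exact t3
    linear_combination (-4*a*b) * t3'
  have hc : Continuous fun x : ℝ => (a * Real.sin (A*x) + b * Real.sin (B*x))^2 := by fun_prop
  have := intervalIntegral.integral_eq_sub_of_hasDerivAt hF (hc.intervalIntegrable _ _)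
  rw [this]
  norm_num [show 2*A*(1/2)=A by ring, show 2*B*(1/2)=B by ring]

lemma deriv_u (m n : ℕ) (x : ℝ) :
    deriv (fun y => u m n x y) 0
      = 2*(Real.sin (n*π*x) * (m*π) + eps m n * Real.sin (m*π*x) * (n*π)) := by
  have key : ∀ c : ℝ, HasDerivAt (fun y : ℝ => Real.sin (c*y)) c 0 := by
    intro c
    have := ((hasDerivAt_id (0:ℝ)).const_mul c).sin
    simpa using this
  have H : HasDerivAt (fun y => u m n x y)
      (2*(Real.sin (n*π*x) * (m*π) + eps m n * Real.sin (m*π*x) * (n*π))) 0 := by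
    unfold u
    have h1 := (key ((m:ℝ)*π)).const_mul (Real.sin (n*π*x))
    have h2 := (key ((n:ℝ)*π)).const_mul (eps m n * Real.sin (m*π*x))
    exact (h1.add h2).const_mul 2
  exact H.deriv

set_option maxHeartbeats 1000000 in
/-- For a fixed odd positive integer `j`, with `δ(j) = 1` if `j ≡ 1 (mod 4)` and
`δ(j) = -1` if `j ≡ 3 (mod 4)`, the half-side Neumann data of `u_{m,m+j}` on the bottom
of the right isosceles triangle satisfies
`lim_{m→∞} ∫₀^{1/2} h² (∂_y u(x,0))² dx = 1 + δ(j)·2/(jπ)`. -/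
theorem neumann_left_half_limit_gap_j (j : ℕ) (hj : 0 < j) (hjodd : Odd j) :
    Tendsto (fun m : ℕ =>
        ∫ x in (0:ℝ)..(1/2),
          (hmn m (m+j)) ^ 2 * (deriv (fun y => u m (m+j) x y) 0) ^ 2)
      atTop
      (nhds (1 + (if j % 4 = 1 then (1:ℝ) else -1) * 2 / (j * Real.pi))) := by
  obtain ⟨k, hk⟩ := hjodd
  have hπ := Real.pi_pos
  have hj1 : (1:ℝ) ≤ (j:ℝ) := by exact_mod_cast hj
  have hjr : (j:ℝ) = 2*(k:ℝ)+1 := by exact_mod_cast congrArg (Nat.cast (R := ℝ)) hk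
  have hδ : (if j % 4 = 1 then (1:ℝ) else -1) = (-1:ℝ)^k := by
    rcases Nat.even_or_odd k with ⟨t,ht⟩|⟨t,ht⟩
    · rw [if_pos (by omega), Even.neg_one_pow ⟨t, by omega⟩]
    · rw [if_neg (by omega), Odd.neg_one_pow ⟨t, by omega⟩]
  rw [hδ]
  set L : ℝ := 1 + (-1:ℝ)^k * 2 / (j*π) with hL
  set g1 : ℕ → ℝ := fun m => (-((-1:ℝ)^k)*(2*j))/(((m:ℝ)^2+((m:ℝ)+j)^2)*π) with hg1def
  set g2 : ℕ → ℝ := fun m =>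
    ((-1:ℝ)^(m+k)*(4*m*((m:ℝ)+j)))/(((m:ℝ)^2+((m:ℝ)+j)^2)*(2*(m:ℝ)+j)*π) with hg2def
  have key : ∀ m : ℕ, 1 ≤ m →
      (∫ x in (0:ℝ)..(1/2), (hmn m (m+j))^2 * (deriv (fun y => u m (m+j) x y) 0)^2)
        = L + (g1 m - g2 m) := by
    intro m hm
    have hm1 : (1:ℝ) ≤ (m:ℝ) := by exact_mod_cast hm
    have hn : ((m+j:ℕ):ℝ) = (m:ℝ)+(j:ℝ) := by push_cast; ring
    have hMpos : (0:ℝ) < (m:ℝ)^2+((m:ℝ)+j)^2 := by nlinarith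
    have hA : ((m:ℝ)+j)*π ≠ 0 := by positivity
    have hB : (m:ℝ)*π ≠ 0 := by
      have : (0:ℝ) < (m:ℝ)*π := by nlinarith
      exact this.ne'
    have hDr : ((m:ℝ)+j)*π - (m:ℝ)*π = (j:ℝ)*π := by ring
    have hD : ((m:ℝ)+j)*π - (m:ℝ)*π ≠ 0 := by
      rw [hDr]; positivity
    have hS : ((m:ℝ)+j)*π + (m:ℝ)*π ≠ 0 := by
      have : (0:ℝ) < ((m:ℝ)+j)*π + (m:ℝ)*π := by nlinarith
      exact this.ne'
    have heps : eps m (m+j) = 1 := by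
      have hodd : Odd (m + (m+j)) := ⟨m+k, by omega⟩
      simp [eps, hodd]
    have e1 : (∫ x in (0:ℝ)..(1/2), (hmn m (m+j))^2 * (deriv (fun y => u m (m+j) x y) 0)^2)
        = ∫ x in (0:ℝ)..(1/2), (4/((m:ℝ)^2+((m:ℝ)+j)^2))
            * ((m:ℝ) * Real.sin ((((m:ℝ)+j)*π)*x) + ((m:ℝ)+j) * Real.sin (((m:ℝ)*π)*x))^2 := by
      apply intervalIntegral.integral_congr
      intro x _
      dsimp only
      have hh : (hmn m (m+j))^2 = 1/(π^2*((m:ℝ)^2+((m+j:ℕ):ℝ)^2)) := by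
        unfold hmn
        rw [div_pow, one_pow, Real.sq_sqrt (by positivity)]
      rw [deriv_u, heps, hh, hn]
      have hπ2 : π ≠ 0 := hπ.ne'
      field_simp
      ring
    rw [e1, intervalIntegral.integral_const_mul,
      integral_two_sines ((m:ℝ)) ((m:ℝ)+j) (((m:ℝ)+j)*π) ((m:ℝ)*π) hA hB hD hS]
    have s1 : Real.sin (((m:ℝ)+j)*π) = 0 := by
      rw [show ((m:ℝ)+j)*π = ((m+j:ℕ):ℝ)*π by rw [hn]]
      exact Real.sin_nat_mul_pi _
    have s2 : Real.sin ((m:ℝ)*π) = 0 := Real.sin_nat_mul_pi m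
    have s3 : Real.sin ((((m:ℝ)+j)*π - (m:ℝ)*π)*(1/2)) = (-1:ℝ)^k := by
      rw [show (((m:ℝ)+j)*π - (m:ℝ)*π)*(1/2) = (2*(k:ℝ)+1)*π/2 by rw [hjr]; ring]
      exact sin_odd_half k
    have s4 : Real.sin ((((m:ℝ)+j)*π + (m:ℝ)*π)*(1/2)) = (-1:ℝ)^(m+k) := by
      rw [show (((m:ℝ)+j)*π + (m:ℝ)*π)*(1/2) = (2*((m+k:ℕ):ℝ)+1)*π/2 by push_cast [hjr]; ring]
      exact sin_odd_half (m+k)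
    rw [s1, s2, s3, s4, hDr, show ((m:ℝ)+j)*π + (m:ℝ)*π = (2*(m:ℝ)+j)*π by ring]
    rw [hL, hg1def, hg2def]
    have hm0 : (m:ℝ) ≠ 0 := by linarith
    have hj0 : (j:ℝ) ≠ 0 := by linarith
    have hmj0 : (m:ℝ)+j ≠ 0 := by linarith
    have h2mj : 2*(m:ℝ)+j ≠ 0 := by linarith
    have hπ0 : π ≠ 0 := hπ.ne'
    field_simp
    ring
  have hDt : Tendsto (fun m : ℕ => ((m:ℝ)^2+((m:ℝ)+j)^2)*π) atTop atTop := by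
    apply tendsto_atTop_mono (fun m => ?_) tendsto_natCast_atTop_atTop
    have h1 : (m:ℝ) ≤ (m:ℝ)^2 := by
      have := Nat.le_self_pow (two_ne_zero) m
      exact_mod_cast (by exact_mod_cast this : (m:ℝ) ≤ ((m^2 : ℕ) : ℝ))
    have h2 : (3:ℝ) < π := Real.pi_gt_three
    nlinarith [sq_nonneg ((m:ℝ)+j), sq_nonneg (m:ℝ)]
  have hg1 : Tendsto g1 atTop (nhds 0) := by
    rw [hg1def]
    simp only [div_eq_mul_inv]
    simpa using hDt.inv_tendsto_atTop.const_mul (-((-1:ℝ)^k)*(2*j))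
  have hg2 : Tendsto g2 atTop (nhds 0) := by
    apply squeeze_zero_norm' (a := fun m : ℕ => (2/π)*(1/(m:ℝ)))
    · filter_upwards [eventually_ge_atTop 1] with m hm
      have hm1 : (1:ℝ) ≤ (m:ℝ) := by exact_mod_cast hm
      have hMpos : (0:ℝ) < (m:ℝ)^2+((m:ℝ)+j)^2 := by nlinarith
      have hden : (0:ℝ) < ((m:ℝ)^2+((m:ℝ)+j)^2)*(2*(m:ℝ)+j)*π := by
        have : (0:ℝ) < 2*(m:ℝ)+j := by linarith
        positivity
      have hnum : (0:ℝ) ≤ 4*(m:ℝ)*((m:ℝ)+j) := by nlinarith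
      have habs : ‖g2 m‖ = (4*(m:ℝ)*((m:ℝ)+j))/(((m:ℝ)^2+((m:ℝ)+j)^2)*(2*(m:ℝ)+j)*π) := by
        rw [hg2def]
        rw [Real.norm_eq_abs, abs_div, abs_mul, abs_pow, abs_neg, abs_one, one_pow, one_mul,
          abs_of_nonneg hnum, abs_of_pos hden]
      rw [habs, show (2:ℝ)/π*(1/(m:ℝ)) = 2/(π*(m:ℝ)) by ring,
        div_le_div_iff₀ hden (by positivity)]
      have hj1' : (1:ℝ) ≤ (j:ℝ) := hj1
      have h5 : 4*(m:ℝ)*((m:ℝ)+j)*(m:ℝ) ≤ 2*(((m:ℝ)^2+((m:ℝ)+j)^2)*(2*(m:ℝ)+j)) := by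
        nlinarith [mul_nonneg (mul_nonneg (by linarith : (0:ℝ) ≤ 4*(m:ℝ))
            (by linarith : (0:ℝ) ≤ (m:ℝ)+j)) (by linarith : (0:ℝ) ≤ (m:ℝ)+j),
          mul_nonneg (sq_nonneg (j:ℝ)) (by linarith : (0:ℝ) ≤ 2*(m:ℝ)+j)]
      have h6 := mul_le_mul_of_nonneg_right h5 hπ.le
      nlinarith [h6]
    · have := tendsto_one_div_atTop_nhds_zero_nat.const_mul ((2:ℝ)/π)
      rw [mul_zero] at this
      exact this
  have hfin : Tendsto (fun m : ℕ => L + (g1 m - g2 m)) atTop (nhds L) := by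
    simpa using (hg1.sub hg2).const_add L
  apply Tendsto.congr' ?_ hfin
  filter_upwards [eventually_ge_atTop 1] with m hm
  exact (key m hm).symm
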